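/- Let K be a loop-free unital free augmented directed complex, let x ∈ νK, let q ≥ 0 and let α be a sign. Then a basis element e lies in the support of x_{q+1}^− if and only if e lies in the support of g_{q+1}^α(x) and e does not lie in the support of ∂⁺a for any basis element a in the support of x_{q+2}^α; and e lies in the support of x_{q+1}^+ if and only if e lies in the support of g_{q+1}^α(x) and e does not lie in the support of ∂⁻a for any basis element a in the support of x_{q+2}^α. (In other words, the input edges of the network G_{q+1}^α(x) are exactly the terms of x_{q+1}^− and its output edges are exactly the terms of x_{q+1}^+.) -/

import Mathlib

open Finsupp

/-- A free augmented directed complex, encoded by its distinguished graded basis: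
`B` is the set of basis elements, `dim` the dimension function, `bd a` the boundary
chain of a basis element `a`, and `eps` the augmentation (supported in dimension 0). -/
structure FADC where
  B : Type
  dim : B → ℕ
  bd : B → (B →₀ ℤ)
  eps : B → ℤ
  bd_dim : ∀ a b, b ∈ (bd a).support → dim b + 1 = dim a
  eps_dim : ∀ b, 0 < dim b → eps b = 0
  bd_bd : ∀ a : B, ((bd a).sum fun b n => n • bd b) = 0
  eps_bd : ∀ a : B, ((bd a).sum fun b n => n * eps b) = 0

namespace FADC

variable (K : FADC)

/-- The boundary homomorphism `∂`, extended to chains. -/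
noncomputable def bdc (c : K.B →₀ ℤ) : K.B →₀ ℤ := c.sum fun b n => n • K.bd b

/-- The augmentation `ε`, extended to chains. -/
noncomputable def epsc (c : K.B →₀ ℤ) : ℤ := c.sum fun b n => n * K.eps b

/-- `∂⁺c`, the positive part of `∂c`. -/
noncomputable def bdp (c : K.B →₀ ℤ) : K.B →₀ ℤ := (K.bdc c).mapRange (fun n => max n 0) (by simp)

/-- `∂⁻c`, the negative part of `∂c`. -/
noncomputable def bdm (c : K.B →₀ ℤ) : K.B →₀ ℤ := (-K.bdc c).mapRange (fun n => max n 0) (by simp)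

/-- `K` is unital if `ε((∂⁻)^q a) = ε((∂⁺)^q a) = 1` for every `q`-dimensional
basis element `a`. -/
def Unital : Prop := ∀ a : K.B,
  K.epsc (K.bdm^[K.dim a] (Finsupp.single a 1)) = 1 ∧
  K.epsc (K.bdp^[K.dim a] (Finsupp.single a 1)) = 1

/-- `K` is loop-free if its basis elements admit a (strict) partial order such that
for every basis element `a` and every `r > 0`, the basis elements occurring in
`(∂⁻)^r a` strictly precede those occurring in `(∂⁺)^r a`. -/
def LoopFree : Prop :=
  ∃ lt : K.B → K.B → Prop, IsStrictOrder K.B lt ∧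
    ∀ (a : K.B) (r : ℕ), 0 < r →
      ∀ b ∈ (K.bdm^[r] (Finsupp.single a 1)).support,
        ∀ b' ∈ (K.bdp^[r] (Finsupp.single a 1)).support, lt b b'

/-- `K` is atomic of dimension `n`. -/
def Atomic (n : ℕ) : Prop :=
  (∀ b : K.B, K.dim b ≤ n) ∧
  (∃! g : K.B, K.dim g = n) ∧
  (∀ b : K.B, K.dim b < n → ∃ a : K.B, K.dim b < K.dim a ∧
    (b ∈ (K.bdm (Finsupp.single a 1)).support ∨ b ∈ (K.bdp (Finsupp.single a 1)).support))

/-- `g_q^α(x)`: given `x_q^- = xq` and `x_{q+1}^α = c`, this is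
`x_q^- + ∂⁺a_1 + … + ∂⁺a_k` where `a_1, …, a_k` are the terms of `c`. -/
noncomputable def gch (xq c : K.B →₀ ℤ) : K.B →₀ ℤ :=
  xq + c.sum fun b n => n • K.bdp (Finsupp.single b 1)

/-- The negative chains `⟨K⟩_q^- = (∂⁻)^{n-q} g` of the canonical atom. -/
noncomputable def atomNeg (g : K.B) (n q : ℕ) : K.B →₀ ℤ :=
  if q ≤ n then K.bdm^[n - q] (Finsupp.single g 1) else 0

/-- The positive chains `⟨K⟩_q^+ = (∂⁺)^{n-q} g` of the canonical atom. -/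
noncomputable def atomPos (g : K.B) (n q : ℕ) : K.B →₀ ℤ :=
  if q ≤ n then K.bdp^[n - q] (Finsupp.single g 1) else 0

end FADC

/-- Membership in `νK`: the double sequence `(x_0^-, x_0^+ | x_1^-, x_1^+ | …)`,
given by `xm` and `xp`, is a member of `νK`. -/
structure NuMem (K : FADC) (xm xp : ℕ → (K.B →₀ ℤ)) : Prop where
  dim_m : ∀ q, ∀ b ∈ (xm q).support, K.dim b = q
  dim_p : ∀ q, ∀ b ∈ (xp q).support, K.dim b = q
  nonneg_m : ∀ q b, 0 ≤ xm q b
  nonneg_p : ∀ q b, 0 ≤ xp q b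
  fin : ∃ n, ∀ q, n < q → xm q = 0 ∧ xp q = 0
  eps_m : K.epsc (xm 0) = 1
  eps_p : K.epsc (xp 0) = 1
  bd_m : ∀ q, K.bdc (xm (q + 1)) = xp q - xm q
  bd_p : ∀ q, K.bdc (xp (q + 1)) = xp q - xm q

/-- `K` together with the class `thin` of thin basis elements is an
`n`-dimensional opetopic directed complex. -/
structure IsODC (K : FADC) (thin : K.B → Prop) (n : ℕ) : Prop where
  atomic : K.Atomic n
  loopFree : K.LoopFree
  unital : K.Unital
  thin_pos : ∀ b, thin b → 0 < K.dim b
  bdp_basis : ∀ b : K.B, 0 < K.dim b →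
    ∃ a : K.B, ¬ thin a ∧ K.bdp (Finsupp.single b 1) = Finsupp.single a 1
  bdm_thin : ∀ b : K.B, thin b →
    ∃ a : K.B, ¬ thin a ∧ K.bdm (Finsupp.single b 1) = Finsupp.single a 1

/-- An opetopic directed complex is reduced if every thin basis element is `∂⁻a`
for some other basis element `a`. -/
def ODCReduced (K : FADC) (thin : K.B → Prop) : Prop :=
  ∀ b, thin b → ∃ a, a ≠ b ∧ K.bdm (Finsupp.single a 1) = Finsupp.single b 1

/-- A network: finite sets of edges and vertices with partially defined source and
target functions; input edges are those with no source, output edges those with no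
target. -/
structure Network where
  E : Type
  V : Type
  finE : Finite E
  finV : Finite V
  src : E → Option V
  tgt : E → Option V

namespace Network

variable (N : Network)

/-- One step of a path: the target of `e` is the source of `e'`. -/
def step (e e' : N.E) : Prop := ∃ v : N.V, N.tgt e = some v ∧ N.src e' = some v

/-- There is a path from `e` to `e'`. -/
def PathTo (e e' : N.E) : Prop := Relation.ReflTransGen N.step e e'

/-- A network is acyclic if there is no nontrivial path from an edge to itself. -/
def Acyclic : Prop := ∀ e : N.E, ¬ Relation.TransGen N.step e e

/-- A network is linear if it is acyclic and consists of a single path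
`e_0, v_1, e_1, …, v_k, e_k`. -/
def Linear : Prop := N.Acyclic ∧
  ∃ (k : ℕ) (e : Fin (k + 1) ≃ N.E) (v : Fin k ≃ N.V),
    N.src (e 0) = none ∧ N.tgt (e (Fin.last k)) = none ∧
    ∀ i : Fin k, N.tgt (e i.castSucc) = some (v i) ∧ N.src (e i.succ) = some (v i)

/-- A network is confluent if it is acyclic, has a unique output edge, and every
vertex is the source of exactly one edge and the target of at least one edge. -/
def Confluent : Prop := N.Acyclic ∧ (∃! e : N.E, N.tgt e = none) ∧
  (∀ v : N.V, ∃! e : N.E, N.src e = some v) ∧ (∀ v : N.V, ∃ e : N.E, N.tgt e = some v)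

end Network

/-- An opetopic network: an acyclic network with a unique output edge, together with
thin edges (which are inputs) and thin vertices (each the target of exactly one edge,
which is not thin). -/
structure OpetopicNetwork extends Network where
  thinE : E → Prop
  thinV : V → Prop
  acyclic : toNetwork.Acyclic
  out_unique : ∃! e : E, tgt e = none
  thinE_input : ∀ e, thinE e → src e = none
  thinV_unique : ∀ v, thinV v → ∃! e, tgt e = some v
  thinV_nonthin : ∀ v e, thinV v → tgt e = some v → ¬ thinE e

/-- An opetopic network is reduced if every thin edge has a target vertex which is
the target of no other edge. -/
def OpetopicNetwork.Reduced (N : OpetopicNetwork) : Prop :=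
  ∀ e, N.thinE e → ∃ v, N.tgt e = some v ∧ ∀ e', N.tgt e' = some v → e' = e

/-- `c` is a constellation from `N` to `P`: a bijection from the vertices of `N` to
the input edges of `P`, preserving thinness, such that for every edge `e` of `P`
there is exactly one edge of `N` with a source but not a target in the preimage of
`I_e` (the input edges of `P` from which there is a path to `e`). -/
def IsConstellation (N P : OpetopicNetwork) (c : N.V → P.E) : Prop :=
  (∀ v, P.src (c v) = none) ∧
  Function.Injective c ∧
  (∀ e : P.E, P.src e = none → ∃ v, c v = e) ∧
  (∀ v, N.thinV v ↔ P.thinE (c v)) ∧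
  (∀ e : P.E, ∃! e' : N.E,
    (∃ v, N.src e' = some v ∧ P.toNetwork.PathTo (c v) e) ∧
    ¬ (∃ v, N.tgt e' = some v ∧ P.toNetwork.PathTo (c v) e))

/-- An `n`-dimensional opetopic sequence `N_0 → N_1 → … → N_n`. -/
structure OpetopicSequence (n : ℕ) where
  N : Fin (n + 1) → OpetopicNetwork
  c : ∀ q : Fin n, (N q.castSucc).V → (N q.succ).E
  constell : ∀ q : Fin n, IsConstellation (N q.castSucc) (N q.succ) (c q)
  linear0 : (N 0).toNetwork.Linear
  noThin0 : ∀ e, ¬ (N 0).thinE e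
  top_single : ∃! _e : (N (Fin.last n)).E, True
  top_noV : IsEmpty (N (Fin.last n)).V

/-- An isomorphism of opetopic sequences: families of bijections on edges and
vertices preserving sources, targets, thin edges and thin vertices, and commuting
with the constellations. -/
def SeqIso (n : ℕ) (S S' : OpetopicSequence n) : Prop :=
  ∃ (fE : ∀ q : Fin (n + 1), (S.N q).E ≃ (S'.N q).E)
    (fV : ∀ q : Fin (n + 1), (S.N q).V ≃ (S'.N q).V),
    (∀ q : Fin (n + 1),
      (∀ e v, (S.N q).src e = some v ↔ (S'.N q).src (fE q e) = some (fV q v)) ∧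
      (∀ e v, (S.N q).tgt e = some v ↔ (S'.N q).tgt (fE q e) = some (fV q v)) ∧
      (∀ e, (S.N q).thinE e ↔ (S'.N q).thinE (fE q e)) ∧
      (∀ v, (S.N q).thinV v ↔ (S'.N q).thinV (fV q v))) ∧
    (∀ q : Fin n, ∀ v, fE q.succ (S.c q v) = S'.c q (fV q.castSucc v))

/-- The opetopic sequence `S` realizes the sequence
`G_0^-(⟨K⟩) → … → G_n^-(⟨K⟩)` associated to the opetopic directed complex `K`
(with top basis element `g` and thin elements `thin`): the edges of `S.N q`
correspond bijectively to the terms of `g_q^-(⟨K⟩)`, the vertices to the terms of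
`⟨K⟩_{q+1}^-`, sources, targets and thinness are as prescribed by `∂⁺`, `∂⁻` and
`thin`, and the constellations are the identity correspondences. -/
def RealizedBy (K : FADC) (thin : K.B → Prop) (n : ℕ) (g : K.B)
    (S : OpetopicSequence n) : Prop :=
  ∃ (eE : ∀ q : Fin (n + 1), (S.N q).E → K.B)
    (eV : ∀ q : Fin (n + 1), (S.N q).V → K.B),
    (∀ q : Fin (n + 1),
      Function.Injective (eE q) ∧
      (∀ ed, eE q ed ∈ (K.gch (K.atomNeg g n q.1) (K.atomNeg g n (q.1 + 1))).support) ∧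
      (∀ b ∈ (K.gch (K.atomNeg g n q.1) (K.atomNeg g n (q.1 + 1))).support,
        ∃ ed, eE q ed = b) ∧
      Function.Injective (eV q) ∧
      (∀ v, eV q v ∈ (K.atomNeg g n (q.1 + 1)).support) ∧
      (∀ b ∈ (K.atomNeg g n (q.1 + 1)).support, ∃ v, eV q v = b) ∧
      (∀ ed v, (S.N q).src ed = some v ↔
        eE q ed ∈ (K.bdp (Finsupp.single (eV q v) 1)).support) ∧
      (∀ ed v, (S.N q).tgt ed = some v ↔
        eE q ed ∈ (K.bdm (Finsupp.single (eV q v) 1)).support) ∧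
      (∀ ed, (S.N q).thinE ed ↔ thin (eE q ed)) ∧
      (∀ v, (S.N q).thinV v ↔ thin (eV q v))) ∧
    (∀ q : Fin n, ∀ v, eE q.succ (S.c q v) = eV q.castSucc v)

/-- A bundled `n`-dimensional opetopic directed complex. -/
structure ODCBundle (n : ℕ) where
  K : FADC
  thin : K.B → Prop
  g : K.B
  dim_g : K.dim g = n
  isODC : IsODC K thin n

/-- Isomorphism of (bundled) opetopic directed complexes: a dimension- and
thinness-preserving bijection of bases commuting with boundaries and augmentations. -/
def ODCIso {n : ℕ} (A A' : ODCBundle n) : Prop :=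
  ∃ φ : A.K.B ≃ A'.K.B,
    (∀ b, A'.K.dim (φ b) = A.K.dim b) ∧
    (∀ b, A'.thin (φ b) ↔ A.thin b) ∧
    (∀ b, A'.K.bd (φ b) = Finsupp.equivMapDomain φ (A.K.bd b)) ∧
    (∀ b, A'.K.eps (φ b) = A.K.eps b)

/-!
Write `c = x_{q+2}^α`, `m = x_{q+1}^-` and `p = x_{q+1}^+`, so that
`g_{q+1}^α(x) = m + Σ c_a ∂⁺a = p + Σ c_a ∂⁻a`. Everything reduces to the fact that no term
of `m` occurs in `∂⁺a` for a term `a` of `c`; the statement about `p` and `∂⁻` is the same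
fact for the dual complex, whose boundary is `-∂`.

Loop-freeness makes "some term of `∂⁺a` lies weakly below some term of `∂⁻a'`" a strict order
on basis elements. For a maximal term `a₀` of `c` no `∂⁻a` meets `∂⁺a₀`, so
`m + c_{a₀} ∂⁺a₀ ≤ p` there. The coefficients of `p` are at most `1` (by induction on the
dimension, starting from unitality), hence `m` vanishes on `∂⁺a₀` and `c_{a₀} = 1`. Replacing
`c` by `c - a₀` and `p` by `p - ∂a₀` gives a smaller instance of the same situation.
-/

namespace Finsupp

theorem mem_support_iff_mem_support_add {α M : Type*} [AddMonoid M] {f g : α →₀ M}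
    (h : Disjoint f.support g.support) (e : α) :
    e ∈ f.support ↔ e ∈ (f + g).support ∧ e ∉ g.support := by
  classical
  have := @Finset.disjoint_left.1 h e
  rw [support_add_eq h, Finset.mem_union]
  tauto

variable {α β R : Type*} [Semiring R] [PartialOrder R] [IsOrderedRing R]

theorem le_linearCombination_apply {v : α → β →₀ R} (hv : ∀ a, 0 ≤ v a) {c : α →₀ R}
    (hc : 0 ≤ c) (a : α) (e : β) : c a * v a e ≤ linearCombination R v c e := by
  rw [linearCombination_apply, sum_apply]
  by_cases ha : a ∈ c.support
  · exact Finset.single_le_sum (f := fun a => c a • v a e)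
      (fun a _ => mul_nonneg (hc a) (hv a e)) ha
  · rw [notMem_support_iff.1 ha, zero_mul]
    exact Finset.sum_nonneg fun a _ => mul_nonneg (hc a) (hv a e)

variable [NoZeroDivisors R]

theorem mem_support_linearCombination_iff {v : α → β →₀ R} (hv : ∀ a, 0 ≤ v a)
    {c : α →₀ R} (hc : 0 ≤ c) (e : β) :
    e ∈ (linearCombination R v c).support ↔ ∃ a ∈ c.support, e ∈ (v a).support := by
  rw [mem_support_iff, linearCombination_apply, sum_apply, Finsupp.sum, ne_eq]
  simp only [smul_apply, smul_eq_mul]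
  rw [Finset.sum_eq_zero_iff_of_nonneg fun a _ => mul_nonneg (hc a) (hv a e)]
  simp only [mul_eq_zero, mem_support_iff, not_forall, not_or, exists_prop]
  exact exists_congr fun a => by tauto

theorem disjoint_support_linearCombination {v : α → β →₀ R} (hv : ∀ a, 0 ≤ v a)
    {c : α →₀ R} (hc : 0 ≤ c) {s : Finset β} (h : ∀ a ∈ c.support, Disjoint (v a).support s) :
    Disjoint (linearCombination R v c).support s := by
  refine Finset.disjoint_left.2 fun e he => ?_
  obtain ⟨a, ha, hea⟩ := (mem_support_linearCombination_iff hv hc e).1 he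
  exact Finset.disjoint_left.1 (h a ha) hea

end Finsupp

namespace FADC

variable {K : FADC}

variable (K) in
noncomputable def bdPos (a : K.B) : K.B →₀ ℤ := K.bdp (single a 1)

variable (K) in
noncomputable def bdNeg (a : K.B) : K.B →₀ ℤ := K.bdm (single a 1)

theorem bdc_eq_linearCombination (c : K.B →₀ ℤ) : K.bdc c = linearCombination ℤ K.bd c :=
  (linearCombination_apply ℤ c).symm

theorem bdc_single (a : K.B) : K.bdc (single a 1) = K.bd a := by
  rw [bdc_eq_linearCombination, linearCombination_single, one_smul]

theorem bdp_zero : K.bdp 0 = 0 := by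
  rw [bdp, bdc_eq_linearCombination, map_zero, mapRange_zero]

theorem bdPos_apply (a e : K.B) : K.bdPos a e = max (K.bd a e) 0 := by
  rw [bdPos, bdp, mapRange_apply, bdc_single]

theorem bdNeg_apply (a e : K.B) : K.bdNeg a e = max (-K.bd a e) 0 := by
  rw [bdNeg, bdm, mapRange_apply, Finsupp.neg_apply, bdc_single]

theorem bdPos_nonneg (a : K.B) : 0 ≤ K.bdPos a := fun e => by
  rw [bdPos_apply]; exact le_max_right _ _

theorem bdNeg_nonneg (a : K.B) : 0 ≤ K.bdNeg a := fun e => by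
  rw [bdNeg_apply]; exact le_max_right _ _

theorem bd_eq_bdPos_sub_bdNeg (a : K.B) : K.bd a = K.bdPos a - K.bdNeg a := by
  ext e
  rw [Finsupp.sub_apply, bdPos_apply, bdNeg_apply]
  omega

theorem bdc_eq_sub (c : K.B →₀ ℤ) :
    K.bdc c = linearCombination ℤ K.bdPos c - linearCombination ℤ K.bdNeg c := by
  simp only [bdc_eq_linearCombination, linearCombination_apply, ← sum_sub, ← smul_sub,
    ← bd_eq_bdPos_sub_bdNeg]

theorem gch_eq (m c : K.B →₀ ℤ) : K.gch m c = m + linearCombination ℤ K.bdPos c := by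
  rw [gch, linearCombination_apply]
  rfl

theorem add_linearCombination_bdPos {m p c : K.B →₀ ℤ} (h : K.bdc c = p - m) :
    m + linearCombination ℤ K.bdPos c = p + linearCombination ℤ K.bdNeg c := by
  rw [bdc_eq_sub, sub_eq_sub_iff_add_eq_add] at h
  rw [add_comm m, h]

theorem epsc_sub (c d : K.B →₀ ℤ) : K.epsc (c - d) = K.epsc c - K.epsc d :=
  sum_sub_index fun a b₁ b₂ => sub_mul b₁ b₂ (K.eps a)

theorem epsc_single (b : K.B) : K.epsc (single b 1) = K.eps b := by
  rw [epsc, sum_single_index (zero_mul _), one_mul]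

theorem Unital.eps_eq_one (hU : K.Unital) {b : K.B} (hb : K.dim b = 0) : K.eps b = 1 := by
  simpa [hb, epsc_single] using (hU b).1

theorem Unital.bdPos_ne_zero (hU : K.Unital) {a : K.B} (ha : 0 < K.dim a) : K.bdPos a ≠ 0 := by
  intro h
  obtain ⟨k, hk⟩ := Nat.exists_eq_add_of_lt ha
  have h1 := (hU a).2
  rw [hk, zero_add, Function.iterate_succ_apply, ← bdPos, h, Function.iterate_fixed bdp_zero,
    epsc, sum_zero_index] at h1
  exact zero_ne_one h1

theorem Unital.coeff_le_one_of_epsc_eq_one (hU : K.Unital) {u : K.B →₀ ℤ} (hu : 0 ≤ u)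
    (hdim : ∀ b ∈ u.support, K.dim b = 0) (heps : K.epsc u = 1) (e : K.B) : u e ≤ 1 := by
  have hsum : ∑ b ∈ u.support, u b = 1 := by
    rw [← heps, epsc, Finsupp.sum]
    exact Finset.sum_congr rfl fun b hb => by rw [hU.eps_eq_one (hdim b hb), mul_one]
  by_cases he : e ∈ u.support
  · exact hsum ▸ Finset.single_le_sum (fun b _ => hu b) he
  · rw [notMem_support_iff.1 he]; exact zero_le_one

theorem LoopFree.exists_disjoint (hLF : K.LoopFree) {s : Finset K.B} (hs : s.Nonempty) :
    ∃ a₀ ∈ s, ∀ a ∈ s, Disjoint (K.bdPos a₀).support (K.bdNeg a).support := by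
  obtain ⟨lt, hlt, hord⟩ := hLF
  have hord1 : ∀ a, ∀ b ∈ (K.bdNeg a).support, ∀ b' ∈ (K.bdPos a).support, lt b b' :=
    fun a => hord a 1 one_pos
  let r (a a' : K.B) : Prop :=
    ∃ e ∈ (K.bdPos a).support, ∃ f ∈ (K.bdNeg a').support, e = f ∨ lt e f
  have hr : IsStrictOrder K.B r :=
    { irrefl := by
        rintro a ⟨e, he, f, hf, rfl | hef⟩
        · exact hlt.irrefl e (hord1 a e hf e he)
        · exact hlt.irrefl e (hlt.trans _ _ _ hef (hord1 a f hf e he))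
      trans := by
        rintro a b c ⟨e, he, f, hf, hef⟩ ⟨e', he', f', hf', hef'⟩
        have hee' : lt e e' := by
          rcases hef with rfl | hef
          exacts [hord1 b e hf e' he', hlt.trans _ _ _ hef (hord1 b f hf e' he')]
        refine ⟨e, he, f', hf', Or.inr ?_⟩
        rcases hef' with rfl | hef'
        exacts [hee', hlt.trans _ _ _ hee' hef'] }
  obtain ⟨a₀, ha₀, hmax⟩ := Set.wellFoundedOn_iff.1
    ((s.finite_toSet.wellFoundedOn (r := Function.swap r))) |>.has_min (s : Set K.B) hs
  refine ⟨a₀, ha₀, fun a ha => Finset.disjoint_left.2 fun e he hf => ?_⟩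
  exact hmax a ha ⟨⟨e, he, e, hf, Or.inl rfl⟩, ha, ha₀⟩

variable (K) in
/-- `K.IsNuChain n u`: `u` is `x_n^-` (equivalently `x_n^+`) for some `x ∈ νK`. The recursion
need not ask for `∂v = ∂w`, which follows from `∂(w - v) = ∂∂u = 0`. -/
def IsNuChain : ℕ → (K.B →₀ ℤ) → Prop
  | 0, u => 0 ≤ u ∧ (∀ b ∈ u.support, K.dim b = 0) ∧ K.epsc u = 1
  | n + 1, u => 0 ≤ u ∧ (∀ b ∈ u.support, K.dim b = n + 1) ∧
      ∃ v w, IsNuChain n v ∧ IsNuChain n w ∧ K.bdc u = w - v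

theorem IsNuChain.nonneg {n : ℕ} {u : K.B →₀ ℤ} (h : K.IsNuChain n u) : 0 ≤ u := by
  cases n <;> exact h.1

theorem IsNuChain.dim {n : ℕ} {u : K.B →₀ ℤ} (h : K.IsNuChain n u) :
    ∀ b ∈ u.support, K.dim b = n := by
  cases n <;> exact h.2.1

theorem IsNuChain.sub_bd {n : ℕ} {p : K.B →₀ ℤ} (hp : K.IsNuChain n p) {a : K.B}
    (ha : K.dim a = n + 1) (hle : K.bd a ≤ p) : K.IsNuChain n (p - K.bd a) := by
  classical
  have hdim : ∀ b ∈ (p - K.bd a).support, K.dim b = n := fun b hb => by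
    rcases Finset.mem_union.1 (support_sub hb) with hb | hb
    exacts [hp.dim b hb, by have := K.bd_dim a b hb; omega]
  cases n with
  | zero =>
    refine ⟨sub_nonneg.2 hle, hdim, ?_⟩
    rw [epsc_sub, hp.2.2, epsc, K.eps_bd, sub_zero]
  | succ n =>
    obtain ⟨-, -, v, w, hv, hw, hbd⟩ := hp
    refine ⟨sub_nonneg.2 hle, hdim, v, w, hv, hw, ?_⟩
    rw [bdc_eq_linearCombination, map_sub, ← bdc_eq_linearCombination,
      ← bdc_eq_linearCombination, hbd, bdc, K.bd_bd, sub_zero]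

theorem _root_.NuMem.isNuChain {xm xp : ℕ → (K.B →₀ ℤ)} (hx : NuMem K xm xp) :
    ∀ n, K.IsNuChain n (xm n) ∧ K.IsNuChain n (xp n)
  | 0 => ⟨⟨hx.nonneg_m 0, hx.dim_m 0, hx.eps_m⟩, ⟨hx.nonneg_p 0, hx.dim_p 0, hx.eps_p⟩⟩
  | n + 1 =>
    ⟨⟨hx.nonneg_m _, hx.dim_m _, _, _, hx.isNuChain n |>.1, hx.isNuChain n |>.2, hx.bd_m n⟩,
      ⟨hx.nonneg_p _, hx.dim_p _, _, _, hx.isNuChain n |>.1, hx.isNuChain n |>.2, hx.bd_p n⟩⟩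

theorem eq_one_and_disjoint_and_bd_le_of_disjoint (hU : K.Unital) {m p c : K.B →₀ ℤ}
    (hm : 0 ≤ m) (hp₀ : 0 ≤ p) (hp₁ : ∀ e, p e ≤ 1) (hc : 0 ≤ c) (hbdc : K.bdc c = p - m)
    {a₀ : K.B} (ha₀ : a₀ ∈ c.support) (hdim : 0 < K.dim a₀)
    (hmax : ∀ a ∈ c.support, Disjoint (K.bdPos a₀).support (K.bdNeg a).support) :
    c a₀ = 1 ∧ Disjoint (K.bdPos a₀).support m.support ∧ K.bd a₀ ≤ p := by
  have hneg : ∀ e ∈ (K.bdPos a₀).support, linearCombination ℤ K.bdNeg c e = 0 := by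
    intro e he
    rw [← notMem_support_iff, mem_support_linearCombination_iff bdNeg_nonneg hc]
    rintro ⟨a, ha, hea⟩
    exact Finset.disjoint_left.1 (hmax a ha) he hea
  have hc₀ : 1 ≤ c a₀ := lt_of_le_of_ne (hc a₀) (mem_support_iff.1 ha₀).symm
  -- on `∂⁺a₀`, `m e + c a₀ * (∂⁺a₀) e ≤ p e ≤ 1` with both factors of the product `≥ 1`
  have key : ∀ e ∈ (K.bdPos a₀).support, m e = 0 ∧ c a₀ = 1 ∧ K.bdPos a₀ e ≤ p e := by
    intro e he
    have h₁ := congrArg (· e) (add_linearCombination_bdPos hbdc)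
    simp only [Finsupp.add_apply, hneg e he, add_zero] at h₁
    have h₂ := le_linearCombination_apply bdPos_nonneg hc a₀ e
    have h₃ : 1 ≤ K.bdPos a₀ e := lt_of_le_of_ne (bdPos_nonneg a₀ e) (mem_support_iff.1 he).symm
    have h₄ : 0 ≤ m e := hm e
    have h₅ := hp₁ e
    refine ⟨by nlinarith, by nlinarith, by nlinarith⟩
  obtain ⟨e₀, he₀⟩ := support_nonempty_iff.2 (hU.bdPos_ne_zero hdim)
  refine ⟨(key e₀ he₀).2.1,
    Finset.disjoint_left.2 fun e he => notMem_support_iff.2 (key e he).1, fun e => ?_⟩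
  have hbd := congrArg (· e) (bd_eq_bdPos_sub_bdNeg a₀)
  simp only [Finsupp.sub_apply] at hbd
  have : 0 ≤ K.bdNeg a₀ e := bdNeg_nonneg a₀ e
  by_cases he : e ∈ (K.bdPos a₀).support
  · linarith [(key e he).2.2]
  · rw [notMem_support_iff.1 he] at hbd
    linarith [show 0 ≤ p e from hp₀ e]

theorem eq_one_and_disjoint_of_bdc_eq (hLF : K.LoopFree) (hU : K.Unital) {n : ℕ}
    (hbound : ∀ u, K.IsNuChain n u → ∀ e, u e ≤ 1) {m p c : K.B →₀ ℤ} (hm : 0 ≤ m)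
    (hp : K.IsNuChain n p) (hc : 0 ≤ c) (hdim : ∀ a ∈ c.support, K.dim a = n + 1)
    (hbdc : K.bdc c = p - m) :
    ∀ a ∈ c.support, c a = 1 ∧ Disjoint (K.bdPos a).support m.support := by
  classical
  generalize hN : c.support.card = N
  induction N generalizing c p with
  | zero => simp_all
  | succ N ih =>
    obtain ⟨a₀, ha₀, hmax⟩ := hLF.exists_disjoint (s := c.support) (Finset.card_pos.1 (by omega))
    obtain ⟨hca₀, hdisj₀, hle⟩ := eq_one_and_disjoint_and_bd_le_of_disjoint hU hm hp.nonneg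
      (hbound p hp) hc hbdc ha₀ (by rw [hdim a₀ ha₀]; omega) hmax
    have hc' : 0 ≤ c.erase a₀ := fun a => by
      rw [erase_apply]; split_ifs
      exacts [le_rfl, hc a]
    have hbdc' : K.bdc (c.erase a₀) = (p - K.bd a₀) - m := by
      rw [← erase_add_single a₀ c, hca₀, bdc_eq_linearCombination, map_add,
        linearCombination_single, one_smul, ← bdc_eq_linearCombination] at hbdc
      rw [← sub_eq_of_eq_add hbdc.symm]
      abel
    have ih' := ih (hp.sub_bd (hdim a₀ ha₀) hle) hc'
      (fun a ha => hdim a (support_erase.subset ha |> Finset.mem_of_mem_erase)) hbdc'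
      (by rw [support_erase, Finset.card_erase_of_mem ha₀, hN, Nat.add_sub_cancel])
    intro a ha
    by_cases h : a = a₀
    · exact h ▸ ⟨hca₀, hdisj₀⟩
    · simpa [erase_ne h] using ih' a (by simpa [support_erase, h] using ha)

theorem IsNuChain.coeff_le_one (hLF : K.LoopFree) (hU : K.Unital) :
    ∀ {n : ℕ} {u : K.B →₀ ℤ}, K.IsNuChain n u → ∀ e, u e ≤ 1
  | 0, _, ⟨hu, hdim, heps⟩ => hU.coeff_le_one_of_epsc_eq_one hu hdim heps
  | n + 1, u, ⟨hu, hdim, v, w, hv, hw, hbd⟩ => fun e => by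
    by_cases he : e ∈ u.support
    · exact (eq_one_and_disjoint_of_bdc_eq hLF hU (fun _ h => h.coeff_le_one hLF hU) hv.nonneg
        hw hu hdim hbd e he).1.le
    · rw [notMem_support_iff.1 he]; exact zero_le_one

section NuMem

variable {xm xp : ℕ → (K.B →₀ ℤ)} {n : ℕ} {c : K.B →₀ ℤ}

theorem _root_.NuMem.isNuChain_of_or (hx : NuMem K xm xp) (hc : c = xm n ∨ c = xp n) :
    K.IsNuChain n c := by
  rcases hc with rfl | rfl
  exacts [(hx.isNuChain n).1, (hx.isNuChain n).2]

theorem _root_.NuMem.bdc_eq_of_or (hx : NuMem K xm xp) (hc : c = xm (n + 1) ∨ c = xp (n + 1)) :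
    K.bdc c = xp n - xm n := by
  rcases hc with rfl | rfl
  exacts [hx.bd_m n, hx.bd_p n]

theorem _root_.NuMem.disjoint_support_bdPos (hLF : K.LoopFree) (hU : K.Unital)
    (hx : NuMem K xm xp) (hc : c = xm (n + 1) ∨ c = xp (n + 1)) :
    ∀ a ∈ c.support, Disjoint (K.bdPos a).support (xm n).support := by
  obtain ⟨hc₀, hdim, -⟩ := hx.isNuChain_of_or hc
  exact fun a ha => (eq_one_and_disjoint_of_bdc_eq hLF hU (fun _ h => h.coeff_le_one hLF hU)
    (hx.nonneg_m n) (hx.isNuChain n).2 hc₀ hdim (hx.bdc_eq_of_or hc) a ha).2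

end NuMem

variable (K) in
noncomputable abbrev dual : FADC where
  B := K.B
  dim := K.dim
  bd a := -K.bd a
  eps := K.eps
  bd_dim a b hb := K.bd_dim a b (by rwa [support_neg] at hb)
  eps_dim := K.eps_dim
  bd_bd a := by
    simpa [Finsupp.sum, Finset.sum_neg_distrib] using K.bd_bd a
  eps_bd a := by
    simpa [Finsupp.sum, Finset.sum_neg_distrib] using K.eps_bd a

theorem dual_bdc (c : K.B →₀ ℤ) : K.dual.bdc c = -K.bdc c := by
  simp only [bdc, smul_neg, Finsupp.sum, Finset.sum_neg_distrib]

theorem dual_bdp : K.dual.bdp = K.bdm := funext fun c => by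
  rw [bdp, dual_bdc]; rfl

theorem dual_bdm : K.dual.bdm = K.bdp := funext fun c => by
  rw [bdm, dual_bdc, neg_neg]; rfl

theorem dual_bdPos (a : K.B) : K.dual.bdPos a = K.bdNeg a := by
  rw [bdPos, dual_bdp]; rfl

theorem LoopFree.dual (hLF : K.LoopFree) : K.dual.LoopFree := by
  obtain ⟨lt, hlt, hord⟩ := hLF
  refine ⟨Function.swap lt, inferInstance, fun a r hr b hb b' hb' => ?_⟩
  rw [dual_bdm] at hb
  rw [dual_bdp] at hb'
  exact hord a r hr b' hb' b hb

theorem Unital.dual (hU : K.Unital) : K.dual.Unital := fun a => by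
  rw [dual_bdm, dual_bdp]
  exact (hU a).symm

theorem _root_.NuMem.dual {xm xp : ℕ → (K.B →₀ ℤ)} (hx : NuMem K xm xp) :
    NuMem K.dual xp xm where
  dim_m := hx.dim_p
  dim_p := hx.dim_m
  nonneg_m := hx.nonneg_p
  nonneg_p := hx.nonneg_m
  fin := hx.fin.imp fun _ h q hq => (h q hq).symm
  eps_m := hx.eps_p
  eps_p := hx.eps_m
  bd_m q := by rw [dual_bdc, hx.bd_p, neg_sub]
  bd_p q := by rw [dual_bdc, hx.bd_m, neg_sub]

end FADC

/-- The input edges of `G_{q+1}^α(x)` are exactly the terms of `x_{q+1}^-`, and its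
output edges are exactly the terms of `x_{q+1}^+`. -/
theorem stmt12 (K : FADC) (hLF : K.LoopFree) (hU : K.Unital)
    (xm xp : ℕ → (K.B →₀ ℤ)) (hx : NuMem K xm xp) (q : ℕ)
    (xa : ℕ → K.B →₀ ℤ) (hxa : xa = xm ∨ xa = xp) :
    ∀ e : K.B,
      (e ∈ (xm (q + 1)).support ↔
        e ∈ (K.gch (xm (q + 1)) (xa (q + 2))).support ∧
        ¬ ∃ a ∈ (xa (q + 2)).support, e ∈ (K.bdp (Finsupp.single a 1)).support) ∧
      (e ∈ (xp (q + 1)).support ↔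
        e ∈ (K.gch (xm (q + 1)) (xa (q + 2))).support ∧
        ¬ ∃ a ∈ (xa (q + 2)).support, e ∈ (K.bdm (Finsupp.single a 1)).support) := by
  set c := xa (q + 2)
  have hc : c = xm (q + 2) ∨ c = xp (q + 2) := hxa.imp (congrFun · _) (congrFun · _)
  have hc₀ : 0 ≤ c := (hx.isNuChain_of_or hc).nonneg
  have hin := hx.disjoint_support_bdPos hLF hU hc
  have hout := hx.dual.disjoint_support_bdPos hLF.dual hU.dual hc.symm
  simp only [FADC.dual_bdPos] at hout
  intro e
  have hpos : (¬ ∃ a ∈ c.support, e ∈ (K.bdp (single a 1)).support) ↔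
      e ∉ (linearCombination ℤ K.bdPos c).support :=
    (mem_support_linearCombination_iff FADC.bdPos_nonneg hc₀ e).not.symm
  have hneg : (¬ ∃ a ∈ c.support, e ∈ (K.bdm (single a 1)).support) ↔
      e ∉ (linearCombination ℤ K.bdNeg c).support :=
    (mem_support_linearCombination_iff FADC.bdNeg_nonneg hc₀ e).not.symm
  rw [hpos, hneg, FADC.gch_eq]
  refine ⟨mem_support_iff_mem_support_add ?_ e, ?_⟩
  · exact (disjoint_support_linearCombination FADC.bdPos_nonneg hc₀ hin).symm
  · rw [FADC.add_linearCombination_bdPos (hx.bdc_eq_of_or hc)]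
    exact mem_support_iff_mem_support_add
      (disjoint_support_linearCombination FADC.bdNeg_nonneg hc₀ hout).symm e
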